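/- The rank of the 12×9 matrix M plus the dimension of the quotient ker(N)/im(M) plus the rank of N equals 12, i.e. 7 + 1 + 4 = 12 = dim C⁵, verifying the rank–nullity bookkeeping of the weight-10 complex. -/

import Mathlib

open Matrix

def Mt : Matrix (Fin 9) (Fin 12) ℚ :=
  !![-135/4, 0, -60, 15/2, -45, -15, 5/4, -45/4, 75/2, 0, 0, 0; 108/11, 18/11, 0, 0, 0, 60/11, 46/11, -90/11, 156/11, 0, 0, 0; 27/4, 0, 12, -9/2, -9, 0, 0, 0, 0, 27/4, 18, 0; 0, 0, -10, 2/3, -2, 2, 1, 0, 6, 4, -1, 0; 0, 5/2, 29, 47/3, -23, 43, 13/2, 9/2, 25, 16, -71/2, 0; 0, 5, 45, 155/6, -40, 65, 10, 0, 50, 20, -115/2, 0; 0, 3/2, 18, 23/2, -3, 30, 11/2, 9/2, 9, 6, -33, 0; 0, 0, 0, 0, 0, 6, 7, 0, -6, 0, 0, 0; 0, 0, -6, -3, 0, 0, 0, 0, 0, 3, -6, 70]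

def M : Matrix (Fin 12) (Fin 9) ℚ := Mt.transpose

def N : Matrix (Fin 4) (Fin 12) ℚ :=
  !![0, 140, 0, 0, 0, -15, 15, 30, 5/2, 0, 0, 0; -5, -4, 1/4, -11/2, 31/12, 31/6, -3, -2, 5/3, -1, 2, 0; -16, 32, -2, -12, 22/3, 58/3, -18, -12, -5/3, 0, 8, 0; 0, 0, 0, 42, 7, 0, 0, 0, 0, 0, 14, 3]

def H : Type :=
  LinearMap.ker N.mulVecLin ⧸
    (Submodule.comap (LinearMap.ker N.mulVecLin).subtype (LinearMap.range M.mulVecLin))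

noncomputable instance : AddCommGroup H := by unfold H; infer_instance
noncomputable instance : Module ℚ H := by unfold H; infer_instance

theorem LinearMap.finrank_range_add_finrank_homology_add_finrank_range
    {K U V W : Type*} [Field K] [AddCommGroup U] [Module K U] [AddCommGroup V] [Module K V]
    [AddCommGroup W] [Module K W] [FiniteDimensional K V]
    (f : U →ₗ[K] V) (g : V →ₗ[K] W) (hgf : g ∘ₗ f = 0) :
    Module.finrank K (LinearMap.range f) +
        Module.finrank K (LinearMap.ker g ⧸ (LinearMap.range f).comap (LinearMap.ker g).subtype) +
        Module.finrank K (LinearMap.range g) =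
      Module.finrank K V := by
  have hle : LinearMap.range f ≤ LinearMap.ker g := LinearMap.range_le_ker_iff.mpr hgf
  have hquot := Submodule.finrank_quotient_add_finrank
    ((LinearMap.range f).comap (LinearMap.ker g).subtype)
  rw [(Submodule.comapSubtypeEquivOfLe hle).finrank_eq] at hquot
  have hrank_nullity := LinearMap.finrank_range_add_finrank_ker g
  omega

theorem Matrix.rank_add_finrank_homology_add_rank {K m n p : Type*} [Field K]
    [Fintype m] [Fintype n] (A : Matrix m n K) (B : Matrix p m K) (hBA : B * A = 0) :
    A.rank + Module.finrank K (LinearMap.ker B.mulVecLin ⧸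
        (LinearMap.range A.mulVecLin).comap (LinearMap.ker B.mulVecLin).subtype) + B.rank =
      Fintype.card m := by
  rw [← Module.finrank_fintype_fun_eq_card K]
  exact LinearMap.finrank_range_add_finrank_homology_add_finrank_range _ _
    (by rw [← Matrix.mulVecLin_mul, hBA, Matrix.mulVecLin_zero])

theorem N_mul_M : N * M = 0 := by
  ext i j
  fin_cases i <;> fin_cases j <;>
    norm_num [M, Mt, N, Matrix.mul_apply, Fin.sum_univ_succ]

theorem stmt17 :
    M.rank + Module.finrank ℚ H + N.rank = 12 :=
  Matrix.rank_add_finrank_homology_add_rank M N N_mul_M
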